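/- Charged spacetime Penrose inequality in spherical symmetry (radial formulation of Theorem 1.1). Let n ≥ 3, λ ≥ 0, r₊ > 0, and let V, k_I, k_S, E_I be spherically symmetric charged radial data on [r₊,∞) satisfying the radial Einstein–Maxwell constraint equations with uncharged energy density μ̂ and radial momentum density Ĵ_ν and the Gauss law, with charge q. Assume: (i) the dominant energy condition μ̂(r) ≥ |Ĵ_ν(r)| for all r > r₊; (ii) the outermost condition H(r) > |k_S(r)| for all r > r₊; (iii) the boundary sphere r = r₊ is a marginally outer trapped surface, i.e. k_S(r₊)² = H(r₊)² = (n−1)²·V(r₊)/r₊²; (iv) m_CH is continuous at r₊ and m_CH(r) → E as r → ∞. Then E ≥ (1/2)·[ r₊^{n−2} + q²/r₊^{n−2} + λ·r₊^{n} ]. -/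

import Mathlib

open Real Filter

/-- Mean curvature of the coordinate sphere of radius `r`: `H = (n-1)√(V r)/r`. -/
noncomputable def sphMeanCurv (n : ℕ) (V : ℝ → ℝ) (r : ℝ) : ℝ :=
  ((n : ℝ) - 1) * Real.sqrt (V r) / r

/-- Scalar curvature of `g = V⁻¹dr² + r²·(round metric)`:
`R = (n-1) r^{1-n} (d/dr)[r^{n-2}(1 - V)]`. -/
noncomputable def sphScalCurv (n : ℕ) (V : ℝ → ℝ) (r : ℝ) : ℝ :=
  ((n : ℝ) - 1) / r ^ (n - 1) * deriv (fun ρ => ρ ^ (n - 2) * (1 - V ρ)) r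

/-- The charged Hawking mass
`m_CH(r) = (r^{n-2}/2)[1 - V + r² k_S²/(n-1)²] + λ r^n/2 + q²/(2 r^{n-2})`. -/
noncomputable def chargedHawkingMass (n : ℕ) (lam q : ℝ) (V kS : ℝ → ℝ) (r : ℝ) : ℝ :=
  r ^ (n - 2) / 2 * (1 - V r + r ^ 2 * kS r ^ 2 / ((n : ℝ) - 1) ^ 2)
    + lam * r ^ n / 2 + q ^ 2 / (2 * r ^ (n - 2))

/-!
The charged Hawking mass is nondecreasing outside the horizon. Differentiating it and
eliminating `V'` by the Hamiltonian constraint, `k_S'` by the momentum constraint and the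
Maxwell energy `V E_I²` by the Gauss law gives
`m_CH' = 8π r^{n-1}/(n-1) · (μ̂ - k_S Ĵ_ν / H)`, which is nonnegative because `|Ĵ_ν| ≤ μ̂`
and `|k_S| < H`. At a MOTS `r² k_S²/(n-1)² = V`, so `m_CH(r₊)` is exactly the right-hand
side, and monotonicity passes the bound to the limit `E`.
-/

theorem le_of_tendsto_of_hasDerivAt_nonneg {f f' : ℝ → ℝ} {a L : ℝ}
    (hfa : ContinuousWithinAt f (Set.Ici a) a)
    (hf : ∀ x, a < x → HasDerivAt f (f' x) x) (hf' : ∀ x, a < x → 0 ≤ f' x)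
    (hlim : Tendsto f atTop (nhds L)) : f a ≤ L := by
  have hmono : MonotoneOn f (Set.Ici a) := by
    refine monotoneOn_of_hasDerivWithinAt_nonneg (f' := f') (convex_Ici a) ?_ ?_ ?_
    · intro x hx
      rcases (Set.mem_Ici.mp hx).eq_or_lt with rfl | hax
      · exact hfa
      · exact (hf x hax).continuousAt.continuousWithinAt
    · rw [interior_Ici]
      exact fun x hx => (hf x hx).hasDerivWithinAt
    · rw [interior_Ici]
      exact hf'
  exact ge_of_tendsto hlim <| (eventually_ge_atTop a).mono fun x hx =>
    hmono Set.self_mem_Ici hx hx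

theorem mul_div_le_of_abs_le_of_abs_lt {k J μ H : ℝ} (hJ : |J| ≤ μ) (hk : |k| < H) :
    k * J / H ≤ μ := by
  have hH : 0 < H := (abs_nonneg k).trans_lt hk
  rw [div_le_iff₀ hH]
  calc k * J ≤ |k| * |J| := by rw [← abs_mul]; exact le_abs_self _
    _ ≤ H * μ := mul_le_mul hk.le hJ (abs_nonneg J) hH.le
    _ = μ * H := mul_comm _ _

theorem electric_energy_eq_of_gauss_law {c ρ v e q : ℝ} (hc : 0 < c) (hv : 0 ≤ v)
    (hq : √(2 / c) * ρ * √v * e = q) : 2 * v * e ^ 2 * ρ ^ 2 = c * q ^ 2 := by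
  rw [← hq, mul_pow, mul_pow, mul_pow, sq_sqrt (div_nonneg zero_le_two hc.le), sq_sqrt hv]
  field_simp

theorem sphScalCurv_eq {n : ℕ} (hn : 2 ≤ n) {V : ℝ → ℝ} {r : ℝ} (hV : DifferentiableAt ℝ V r) :
    sphScalCurv n V r = ((n : ℝ) - 1) / r ^ (n - 1) *
      (((n : ℝ) - 2) * r ^ (n - 3) * (1 - V r) - r ^ (n - 2) * deriv V r) := by
  have h : HasDerivAt (fun ρ => ρ ^ (n - 2) * (1 - V ρ))
      ((n - 2 : ℕ) * r ^ (n - 2 - 1) * (1 - V r) + r ^ (n - 2) * (0 - deriv V r)) r :=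
    (hasDerivAt_pow (n - 2) r).mul ((hasDerivAt_const r 1).sub hV.hasDerivAt)
  rw [sphScalCurv, h.deriv, Nat.cast_sub hn, show n - 2 - 1 = n - 3 by omega]
  push_cast
  ring

noncomputable def chargedHawkingMassDeriv (n : ℕ) (lam q : ℝ) (V kS : ℝ → ℝ) (r : ℝ) : ℝ :=
  ((n : ℝ) - 2) * r ^ (n - 3) / 2 * (1 - V r) - r ^ (n - 2) * deriv V r / 2
    + n * r ^ (n - 1) * kS r ^ 2 / (2 * ((n : ℝ) - 1) ^ 2)
    + r ^ n * kS r * deriv kS r / ((n : ℝ) - 1) ^ 2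
    + n * lam * r ^ (n - 1) / 2 - ((n : ℝ) - 2) * q ^ 2 / (2 * r ^ (n - 1))

theorem hasDerivAt_chargedHawkingMass {n : ℕ} (hn : 3 ≤ n) (lam q : ℝ) {V kS : ℝ → ℝ} {r : ℝ}
    (hr : r ≠ 0) (hV : DifferentiableAt ℝ V r) (hkS : DifferentiableAt ℝ kS r) :
    HasDerivAt (chargedHawkingMass n lam q V kS) (chargedHawkingMassDeriv n lam q V kS r) r := by
  obtain ⟨k, rfl⟩ : ∃ k, n = k + 3 := ⟨n - 3, by omega⟩
  have hpow : HasDerivAt (fun ρ : ℝ => ρ ^ (k + 1)) ((k + 1 : ℕ) * r ^ k) r := hasDerivAt_pow _ r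
  have hbracket := ((hasDerivAt_const r 1).sub hV.hasDerivAt).add
    (((hasDerivAt_pow 2 r).mul (hkS.hasDerivAt.pow 2)).div_const ((((k + 3 : ℕ) : ℝ) - 1) ^ 2))
  have hcosm := ((hasDerivAt_pow (k + 3) r).const_mul lam).div_const 2
  have hcharge := ((hpow.const_mul 2).inv (by positivity)).const_mul (q ^ 2)
  have h := (((hpow.div_const 2).mul hbracket).add hcosm).add hcharge
  refine (h.congr_deriv ?_).congr_of_eventuallyEq (Eventually.of_forall fun ρ => ?_)
  · simp only [chargedHawkingMassDeriv, Pi.add_apply, Pi.sub_apply, Pi.mul_apply, Pi.pow_apply,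
      show k + 3 - 3 = k by omega, show k + 3 - 2 = k + 1 by omega, show k + 3 - 1 = k + 2 by omega]
    field_simp
    push_cast
    ring
  · simp only [chargedHawkingMass, Pi.add_apply, Pi.sub_apply, Pi.mul_apply, Pi.pow_apply,
      Pi.inv_apply, show k + 3 - 2 = k + 1 by omega]
    push_cast
    ring

theorem chargedHawkingMassDeriv_eq_of_constraints {n : ℕ} (hn : 3 ≤ n) {lam q μ J r : ℝ}
    {V kI kS EI : ℝ → ℝ} (hr : 0 < r) (hV : 0 < V r) (hVd : DifferentiableAt ℝ V r)
    (hmu : 16 * π * μ =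
      sphScalCurv n V r + (kI r + kS r) ^ 2 - kI r ^ 2 - kS r ^ 2 / ((n : ℝ) - 1)
        - 2 * V r * EI r ^ 2 + (n : ℝ) * ((n : ℝ) - 1) * lam)
    (hJ : 8 * π * J =
      sphMeanCurv n V r * (kI r - kS r / ((n : ℝ) - 1) - r * deriv kS r / ((n : ℝ) - 1)))
    (hq : √(2 / (((n : ℝ) - 1) * ((n : ℝ) - 2))) * r ^ (n - 1) * √(V r) * EI r = q) :
    chargedHawkingMassDeriv n lam q V kS r =
      8 * π * r ^ (n - 1) / ((n : ℝ) - 1) * (μ - kS r * J / sphMeanCurv n V r) := by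
  have hn' : (3 : ℝ) ≤ n := by exact_mod_cast hn
  have hH : sphMeanCurv n V r ≠ 0 :=
    div_ne_zero (mul_ne_zero (by linarith) (sqrt_pos.2 hV).ne') hr.ne'
  have hc : 0 < ((n : ℝ) - 1) * ((n : ℝ) - 2) := by nlinarith
  have hE : 2 * V r * EI r ^ 2 = ((n : ℝ) - 1) * ((n : ℝ) - 2) * q ^ 2 / (r ^ (n - 1)) ^ 2 := by
    rw [eq_div_iff (by positivity), electric_energy_eq_of_gauss_law hc hV.le hq]
  rw [sphScalCurv_eq (by omega) hVd, hE] at hmu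
  have hμ : μ = (16 * π * μ) / (16 * π) := by field_simp
  have hkJ : kS r * J / sphMeanCurv n V r = kS r * (8 * π * J / sphMeanCurv n V r) / (8 * π) := by
    field_simp
  rw [hμ, hkJ, hmu, hJ, mul_div_cancel_left₀ _ hH]
  obtain ⟨k, rfl⟩ : ∃ k, n = k + 3 := ⟨n - 3, by omega⟩
  simp only [chargedHawkingMassDeriv, show k + 3 - 3 = k by omega,
    show k + 3 - 2 = k + 1 by omega, show k + 3 - 1 = k + 2 by omega]
  push_cast
  have hk : (k : ℝ) + 3 - 1 ≠ 0 := by linarith [(k.cast_nonneg : (0 : ℝ) ≤ k)]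
  field_simp
  ring

theorem chargedHawkingMass_eq_of_marginallyTrapped {n : ℕ} (hn : 2 ≤ n) (lam q : ℝ)
    {V kS : ℝ → ℝ} {r : ℝ} (hr : r ≠ 0) (hMOTS : kS r ^ 2 = ((n : ℝ) - 1) ^ 2 * V r / r ^ 2) :
    chargedHawkingMass n lam q V kS r =
      1 / 2 * (r ^ (n - 2) + q ^ 2 / r ^ (n - 2) + lam * r ^ n) := by
  have hn' : (n : ℝ) - 1 ≠ 0 := by
    have : (2 : ℝ) ≤ n := by exact_mod_cast hn
    linarith
  rw [chargedHawkingMass, hMOTS]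
  field_simp
  ring

theorem charged_penrose_inequality_general (n : ℕ) (hn : 3 ≤ n) (lam rp : ℝ)
    (hrp : 0 < rp) (V kI kS EI μ J : ℝ → ℝ) (q E : ℝ)
    (hVpos : ∀ r, rp < r → 0 < V r)
    (hVd : ∀ r, rp < r → DifferentiableAt ℝ V r)
    (hkSd : ∀ r, rp < r → DifferentiableAt ℝ kS r)
    -- Hamiltonian constraint
    (hmu : ∀ r, rp < r → 16 * π * μ r =
      sphScalCurv n V r + (kI r + kS r) ^ 2 - kI r ^ 2 - kS r ^ 2 / ((n : ℝ) - 1)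
        - 2 * V r * EI r ^ 2 + (n : ℝ) * ((n : ℝ) - 1) * lam)
    -- momentum constraint
    (hJ : ∀ r, rp < r → 8 * π * J r =
      sphMeanCurv n V r *
        (kI r - kS r / ((n : ℝ) - 1) - r * deriv kS r / ((n : ℝ) - 1)))
    -- Gauss law with charge `q`
    (hq : ∀ r, rp ≤ r →
      Real.sqrt (2 / (((n : ℝ) - 1) * ((n : ℝ) - 2))) * r ^ (n - 1) * Real.sqrt (V r) * EI r
        = q)
    -- (i) dominant energy condition
    (hDEC : ∀ r, rp < r → |J r| ≤ μ r)
    -- (ii) outermost condition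
    (hout : ∀ r, rp < r → |kS r| < sphMeanCurv n V r)
    -- (iii) the boundary sphere `r = rp` is a MOTS: `k_S(r₊)² = H(r₊)² = (n-1)² V(r₊)/r₊²`
    (hMOTS : kS rp ^ 2 = ((n : ℝ) - 1) ^ 2 * V rp / rp ^ 2)
    -- (iv) continuity at `r₊` and convergence to the total energy `E`
    (hcont : ContinuousWithinAt (chargedHawkingMass n lam q V kS) (Set.Ici rp) rp)
    (hlim : Tendsto (chargedHawkingMass n lam q V kS) atTop (nhds E)) :
    1 / 2 * (rp ^ (n - 2) + q ^ 2 / rp ^ (n - 2) + lam * rp ^ n) ≤ E := by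
  rw [← chargedHawkingMass_eq_of_marginallyTrapped (by omega) lam q hrp.ne' hMOTS]
  refine le_of_tendsto_of_hasDerivAt_nonneg hcont
    (fun r hr => hasDerivAt_chargedHawkingMass hn lam q (hrp.trans hr).ne' (hVd r hr) (hkSd r hr))
    (fun r hr => ?_) hlim
  have hr0 : 0 < r := hrp.trans hr
  have hn' : (0 : ℝ) < (n : ℝ) - 1 := by
    have : (3 : ℝ) ≤ n := by exact_mod_cast hn
    linarith
  rw [chargedHawkingMassDeriv_eq_of_constraints hn hr0 (hVpos r hr) (hVd r hr)
    (hmu r hr) (hJ r hr) (hq r hr.le)]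
  exact mul_nonneg (by positivity)
    (sub_nonneg.2 (mul_div_le_of_abs_le_of_abs_lt (hDEC r hr) (hout r hr)))

/-- Charged spacetime Penrose inequality in spherical symmetry (radial formulation of
Theorem 1.1): under the radial Einstein–Maxwell constraints, the Gauss law, the dominant
energy condition, the outermost condition, a MOTS boundary at `r = r₊`, continuity of
`m_CH` at `r₊` and `m_CH → E` at infinity, one has
`E ≥ (1/2)[ r₊^{n-2} + q²/r₊^{n-2} + λ r₊^n ]`. -/
theorem charged_penrose_inequality (n : ℕ) (hn : 3 ≤ n) (lam rp : ℝ) (hlam : 0 ≤ lam)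
    (hrp : 0 < rp) (V kI kS EI μ J : ℝ → ℝ) (q E : ℝ)
    (hV0 : ∀ r, rp ≤ r → 0 ≤ V r) (hVpos : ∀ r, rp < r → 0 < V r)
    (hVd : ∀ r, rp < r → DifferentiableAt ℝ V r)
    (hkSd : ∀ r, rp < r → DifferentiableAt ℝ kS r)
    (hEIcont : Continuous EI)
    -- Hamiltonian constraint
    (hmu : ∀ r, rp < r → 16 * π * μ r =
      sphScalCurv n V r + (kI r + kS r) ^ 2 - kI r ^ 2 - kS r ^ 2 / ((n : ℝ) - 1)
        - 2 * V r * EI r ^ 2 + (n : ℝ) * ((n : ℝ) - 1) * lam)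
    -- momentum constraint
    (hJ : ∀ r, rp < r → 8 * π * J r =
      sphMeanCurv n V r *
        (kI r - kS r / ((n : ℝ) - 1) - r * deriv kS r / ((n : ℝ) - 1)))
    -- Gauss law with charge `q`
    (hq : ∀ r, rp ≤ r →
      Real.sqrt (2 / (((n : ℝ) - 1) * ((n : ℝ) - 2))) * r ^ (n - 1) * Real.sqrt (V r) * EI r
        = q)
    -- (i) dominant energy condition
    (hDEC : ∀ r, rp < r → |J r| ≤ μ r)
    -- (ii) outermost condition
    (hout : ∀ r, rp < r → |kS r| < sphMeanCurv n V r)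
    -- (iii) the boundary sphere `r = rp` is a MOTS: `k_S(r₊)² = H(r₊)² = (n-1)² V(r₊)/r₊²`
    (hMOTS : kS rp ^ 2 = ((n : ℝ) - 1) ^ 2 * V rp / rp ^ 2)
    -- (iv) continuity at `r₊` and convergence to the total energy `E`
    (hcont : ContinuousWithinAt (chargedHawkingMass n lam q V kS) (Set.Ici rp) rp)
    (hlim : Tendsto (chargedHawkingMass n lam q V kS) atTop (nhds E)) :
    1 / 2 * (rp ^ (n - 2) + q ^ 2 / rp ^ (n - 2) + lam * rp ^ n) ≤ E :=
  charged_penrose_inequality_general n hn lam rp hrp V kI kS EI μ J q E hVpos hVd hkSd hmu hJ hq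
    hDEC hout hMOTS hcont hlim
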